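/- Let I ⊂ K[x_1,…,x_n] be an 𝔪-primary monomial ideal that is equigenerated, i.e. all elements of G(I) have the same total degree d (so that μ_i = x_i^d for each i), and let J = ⟨x_1^d,…,x_n^d⟩. Then the following are equivalent: (1) I is Freiman, i.e. |G(I^2)| = n·|G(I)| − n(n−1)/2; (2) I is a very good ideal; (3) I^2 = I·J. -/

import Mathlib

open MvPolynomial

namespace GasanovaRR

/-- The monomial `x^α` in `K[x_1,…,x_n]`. -/
noncomputable def mono (K : Type*) [Field K] {n : ℕ} (α : Fin n → ℕ) :
    MvPolynomial (Fin n) K :=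
  MvPolynomial.monomial (Finsupp.equivFunOnFinite.symm α) 1

/-- `I` is a monomial ideal: it is generated by a set of monomials. -/
def IsMonomialIdeal {K : Type*} [Field K] {n : ℕ}
    (I : Ideal (MvPolynomial (Fin n) K)) : Prop :=
  ∃ A : Set (Fin n → ℕ), I = Ideal.span (mono K '' A)

/-- `x^α` is a minimal monomial generator of `I`, i.e. `x^α ∈ G(I)`:
`x^α ∈ I` and no monomial in `I` strictly divides it. -/
def IsMinGen {K : Type*} [Field K] {n : ℕ}
    (I : Ideal (MvPolynomial (Fin n) K)) (α : Fin n → ℕ) : Prop :=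
  mono K α ∈ I ∧ ∀ β : Fin n → ℕ, mono K β ∈ I → β ≤ α → β = α

/-- The point `α` lies in the box `B_{a_1,…,a_n}` (for box sizes `d_1,…,d_n`). -/
def InBox {n : ℕ} (d a α : Fin n → ℕ) : Prop :=
  ∀ i, a i * d i ≤ α i ∧ α i ≤ (a i + 1) * d i

/-- `I` is a good ideal (w.r.t. box sizes `d`): for every `l ≥ 1`, every minimal
generator of `I^l` lies in a box whose coordinate sum is `l - 1`. -/
def IsGood {K : Type*} [Field K] {n : ℕ}
    (I : Ideal (MvPolynomial (Fin n) K)) (d : Fin n → ℕ) : Prop :=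
  ∀ l : ℕ, 1 ≤ l → ∀ α : Fin n → ℕ, IsMinGen (I ^ l) α →
    ∃ a : Fin n → ℕ, InBox d a α ∧ ∑ i, a i = l - 1

/-- `I` is an `𝔪`-primary monomial ideal whose minimal generating set contains
`μ_i = x_i^{d_i}` with `d_i > 0` for each `i`. -/
def MPrimaryWithCorners {K : Type*} [Field K] {n : ℕ}
    (I : Ideal (MvPolynomial (Fin n) K)) (d : Fin n → ℕ) : Prop :=
  IsMonomialIdeal I ∧ I ≠ ⊤ ∧ (∀ i, 0 < d i) ∧ ∀ i, IsMinGen I (Pi.single i (d i))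

/-- The ideal `I_{a_1,…,a_n}` associated to the box `B_{a_1,…,a_n}`, generated by
`m / (μ_1^{a_1}⋯μ_n^{a_n})` for `m ∈ B_{a_1,…,a_n} ∩ G(I^l)`, `l = a_1+⋯+a_n+1`. -/
noncomputable def boxIdeal {K : Type*} [Field K] {n : ℕ}
    (I : Ideal (MvPolynomial (Fin n) K)) (d a : Fin n → ℕ) :
    Ideal (MvPolynomial (Fin n) K) :=
  Ideal.span ((fun α => mono K (α - fun i => a i * d i)) ''
    {α | InBox d a α ∧ IsMinGen (I ^ (∑ i, a i + 1)) α})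

/-- The Ratliff–Rush closure `Ĩ = ⋃_{k ≥ 0} (I^{k+1} : I^k)`. -/
noncomputable def ratliffRush {K : Type*} [Field K] {n : ℕ}
    (I : Ideal (MvPolynomial (Fin n) K)) : Ideal (MvPolynomial (Fin n) K) :=
  ⨆ k : ℕ, (I ^ (k + 1)).colon ((I ^ k : Ideal (MvPolynomial (Fin n) K)) : Set (MvPolynomial (Fin n) K))

/-- The cone in `ℕ^n` with set `S` of fixed coordinates and vertex `v`. -/
def Cone {n : ℕ} (S : Set (Fin n)) (v : Fin n → ℕ) : Set (Fin n → ℕ) :=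
  {b | (∀ i ∈ S, b i = v i) ∧ ∀ i ∉ S, v i ≤ b i}

/-- `I` is a very good ideal: it is good and `I_{a_1,…,a_n} = I` for all boxes. -/
def IsVeryGood {K : Type*} [Field K] {n : ℕ}
    (I : Ideal (MvPolynomial (Fin n) K)) (d : Fin n → ℕ) : Prop :=
  IsGood I d ∧ ∀ a : Fin n → ℕ, boxIdeal I d a = I


/-!
Let `A = G(I) ⊆ ℕⁿ`; every element has degree `d` and `A` contains the corners
`D = {d·e_i} = G(J)`. Equigeneration makes `G(I^l)` the `l`-fold sumset `l • A`, so `I² = IJ`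
reads `A + A = A + D`. The translates `A + d·e_i` meet pairwise only in `d·e_i + d·e_j`, whence
`|A + D| = n|A| - C(n,2)`; since `A + D ⊆ A + A`, being Freiman is again `A + A = A + D`.

If `A + A = A + D`, then `(l+1) • A = A + l • D`: a generator of `I^(l+1)` is `β + d·b` with
`β ∈ A` and `∑ b = l`, which lies in the box `b`. Subtracting `d·a` from a generator in the box
`a` lands back in `A`, so every `I_a` equals `I`. Conversely, a very good ideal puts each
`α ∈ A + A` in some box `e_i` with `x^(α - d·e_i) ∈ I`, and comparing degrees gives
`α - d·e_i ∈ A`.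
-/

open Pointwise

section Lattice

variable {n : ℕ}

theorem eq_of_le_of_sum_le {α β : Fin n → ℕ} (hle : α ≤ β) (hsum : ∑ i, β i ≤ ∑ i, α i) :
    α = β :=
  funext ((Finset.sum_eq_sum_iff_of_le fun i _ => hle i).1
    (le_antisymm (Finset.sum_le_sum fun i _ => hle i) hsum) · (Finset.mem_univ _))

theorem single_le_iff {i : Fin n} {c : ℕ} {β : Fin n → ℕ} : Pi.single i c ≤ β ↔ c ≤ β i := by
  refine ⟨fun h => by simpa using h i, fun h j => ?_⟩
  obtain rfl | hj := eq_or_ne j i <;> simp [*]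

theorem apply_le_of_sum_eq {d : ℕ} {β : Fin n → ℕ} (hβ : ∑ j, β j = d) (i : Fin n) : β i ≤ d :=
  hβ ▸ Finset.single_le_sum_of_canonicallyOrdered (Finset.mem_univ i)

theorem eq_single_of_le_apply {i : Fin n} {d : ℕ} {β : Fin n → ℕ} (hβ : ∑ j, β j = d)
    (h : d ≤ β i) : β = Pi.single i d :=
  (eq_of_le_of_sum_le (single_le_iff.2 h) (by simp [hβ])).symm

theorem exists_eq_single_of_dvd {d : ℕ} (hd : 0 < d) {γ : Fin n → ℕ} (hdvd : ∀ i, d ∣ γ i)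
    (hsum : ∑ i, γ i = d) : ∃ k, γ = Pi.single k d := by
  obtain ⟨k, -, hk⟩ := Finset.exists_ne_zero_of_sum_ne_zero (hsum.trans_ne hd.ne')
  exact ⟨k, eq_single_of_le_apply hsum (Nat.le_of_dvd (Nat.pos_of_ne_zero hk) (hdvd k))⟩

end Lattice

theorem nsmul_succ_eq_add_nsmul_of_add_self {M : Type*} [AddCommMonoid M] {A D : Set M}
    (h : A + A = A + D) (l : ℕ) : (l + 1) • A = A + l • D := by
  induction l with
  | zero => simp
  | succ l ih => rw [succ_nsmul, ih, add_right_comm, h, add_assoc, ← succ_nsmul']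

/-- The exponents `G(J)` of `J = ⟨x_1^d, …, x_n^d⟩`. -/
def corners (n d : ℕ) : Set (Fin n → ℕ) := Set.range fun i => Pi.single i d

section Corners

variable {n d : ℕ}

theorem mem_nsmul_corners {l : ℕ} {α : Fin n → ℕ} :
    α ∈ l • corners n d ↔ ∃ b : Fin n → ℕ, ∑ i, b i = l ∧ α = fun i => b i * d := by
  induction l generalizing α with
  | zero =>
    simp only [zero_nsmul, Set.mem_zero, Finset.sum_eq_zero_iff, Finset.mem_univ, true_implies]
    exact ⟨fun h => ⟨0, fun _ => rfl, by ext; simp [h]⟩, fun ⟨b, hb, h⟩ => by ext; simp [h, hb]⟩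
  | succ l ih =>
    rw [succ_nsmul, Set.mem_add]
    constructor
    · rintro ⟨_, hx, _, ⟨i, rfl⟩, rfl⟩
      obtain ⟨b, hb, rfl⟩ := ih.1 hx
      refine ⟨b + Pi.single i 1, by simp [Finset.sum_add_distrib, hb], funext fun j => ?_⟩
      obtain rfl | hj := eq_or_ne j i <;> simp [*, add_mul]
    · rintro ⟨b, hb, rfl⟩
      obtain ⟨i, -, hi⟩ := Finset.exists_ne_zero_of_sum_ne_zero (hb.trans_ne l.succ_ne_zero)
      obtain ⟨c, rfl⟩ : ∃ c, b = c + Pi.single i 1 := ⟨b - Pi.single i 1,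
        (tsub_add_cancel_of_le (single_le_iff.2 (Nat.one_le_iff_ne_zero.2 hi))).symm⟩
      refine ⟨fun j => c j * d, ih.2 ⟨c, ?_, rfl⟩, Pi.single i d, ⟨i, rfl⟩, funext fun j => ?_⟩
      · simpa [Finset.sum_add_distrib] using hb
      · obtain rfl | hj := eq_or_ne j i <;> simp [*, add_mul]

end Corners

section Counting

variable {n d : ℕ} {A : Set (Fin n → ℕ)}

theorem image_add_single_inter_image_add_single (hA : ∀ α ∈ A, ∑ i, α i = d)
    (hcor : corners n d ⊆ A) {i j : Fin n} (hij : i ≠ j) :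
    (· + Pi.single i d) '' A ∩ (· + Pi.single j d) '' A = {Pi.single i d + Pi.single j d} := by
  ext p
  constructor
  · rintro ⟨⟨a, ha, rfl⟩, ⟨a', ha', hp⟩⟩
    have hi : a' i = a i + d := by simpa [Pi.single_eq_of_ne hij] using congrFun hp i
    rw [Set.mem_singleton_iff, ← hp, eq_single_of_le_apply (i := i) (hA a' ha') (by omega)]
  · rintro rfl
    exact ⟨⟨_, hcor ⟨j, rfl⟩, add_comm _ _⟩, ⟨_, hcor ⟨i, rfl⟩, rfl⟩⟩

theorem ncard_biUnion_image_add_single (hd : 0 < d) (hfin : A.Finite)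
    (hA : ∀ α ∈ A, ∑ i, α i = d) (hcor : corners n d ⊆ A) (s : Finset (Fin n)) :
    (⋃ i ∈ s, (· + Pi.single i d) '' A).ncard + s.card.choose 2 = s.card * A.ncard := by
  classical
  induction s using Finset.induction_on with
  | empty => simp
  | @insert i s hi ih =>
    have hinter : (· + Pi.single i d) '' A ∩ ⋃ j ∈ s, (· + Pi.single j d) '' A =
        (fun j => (Pi.single i d + Pi.single j d : Fin n → ℕ)) '' s := by
      rw [Set.inter_iUnion₂, Set.image_eq_iUnion _ (s : Set (Fin n))]
      refine Set.iUnion₂_congr fun j hj => ?_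
      exact image_add_single_inter_image_add_single hA hcor (ne_of_mem_of_not_mem hj hi).symm
    have hinj : Function.Injective fun j => (Pi.single i d + Pi.single j d : Fin n → ℕ) :=
      fun j₁ j₂ h => by
        by_contra hne
        have h' : (Pi.single j₁ d : Fin n → ℕ) = Pi.single j₂ d := add_left_cancel h
        simpa [Pi.single_eq_of_ne hne, hd.ne'] using congrFun h' j₁
    have hcard := Set.ncard_union_add_ncard_inter ((· + Pi.single i d) '' A)
      (⋃ j ∈ s, (· + Pi.single j d) '' A) (hfin.image _)
      (Set.finite_iUnion fun _ => Set.finite_iUnion fun _ => hfin.image _)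
    rw [hinter, Set.ncard_image_of_injective _ hinj, Set.ncard_coe_finset,
      Set.ncard_image_of_injective _ (add_left_injective _)] at hcard
    have hchoose : (s.card + 1).choose 2 = s.card + s.card.choose 2 := by
      simpa using Nat.choose_succ_succ' s.card 1
    rw [Finset.set_biUnion_insert, Finset.card_insert_of_notMem hi, hchoose, Nat.succ_mul]
    omega

theorem ncard_add_corners (hd : 0 < d) (hfin : A.Finite) (hA : ∀ α ∈ A, ∑ i, α i = d)
    (hcor : corners n d ⊆ A) : (A + corners n d).ncard + n.choose 2 = n * A.ncard := by
  have h := ncard_biUnion_image_add_single hd hfin hA hcor Finset.univ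
  rw [← Set.iUnion_add_right_image, corners, Set.biUnion_range]
  simpa using h

end Counting

section MonomialIdeal

variable {K : Type*} [Field K] {n : ℕ}

theorem mono_add (α β : Fin n → ℕ) : mono K (α + β) = mono K α * mono K β := by
  rw [mono, mono, mono, monomial_mul, mul_one]
  congr
  ext
  simp

theorem mono_zero : mono K (0 : Fin n → ℕ) = 1 := by
  rw [mono, show Finsupp.equivFunOnFinite.symm (0 : Fin n → ℕ) = 0 by ext; simp]
  rfl

theorem mono_mem_span_iff {A : Set (Fin n → ℕ)} {β : Fin n → ℕ} :
    mono K β ∈ Ideal.span (mono K '' A) ↔ β ∈ upperClosure A := by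
  classical
  rw [mono, show mono K '' A = (fun s => monomial s (1 : K)) '' (Finsupp.equivFunOnFinite.symm '' A)
    by rw [Set.image_image]; rfl, mem_ideal_span_monomial_image,
    support_monomial, if_neg one_ne_zero, mem_upperClosure]
  simp only [Finset.mem_singleton, forall_eq, Set.exists_mem_image]
  rfl

theorem isMinGen_span_iff {A : Set (Fin n → ℕ)} {β : Fin n → ℕ} :
    IsMinGen (Ideal.span (mono K '' A)) β ↔ Minimal (· ∈ upperClosure A) β := by
  simp only [IsMinGen, Minimal, mono_mem_span_iff]
  exact and_congr_right fun _ => forall_congr' fun γ => forall_congr' fun hγ =>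
    ⟨fun h hle => (h hle).ge, fun h hle => le_antisymm hle (h hle)⟩

theorem IsMonomialIdeal.eq_span_setOf_isMinGen {I : Ideal (MvPolynomial (Fin n) K)}
    (hI : IsMonomialIdeal I) : I = Ideal.span (mono K '' {α | IsMinGen I α}) := by
  obtain ⟨A, rfl⟩ := hI
  refine le_antisymm (Ideal.span_le.2 ?_) (Ideal.span_le.2 ?_)
  · rintro _ ⟨α, hα, rfl⟩
    obtain ⟨γ, hγα, hγ⟩ :=
      exists_minimal_le_of_wellFoundedLT (· ∈ upperClosure A) α (subset_upperClosure hα)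
    exact mono_mem_span_iff.2 (mem_upperClosure.2 ⟨γ, isMinGen_span_iff.2 hγ, hγα⟩)
  · rintro _ ⟨α, hα, rfl⟩
    exact hα.1

theorem setOf_isMinGen_span_of_sum_eq {A : Set (Fin n → ℕ)} {e : ℕ}
    (hA : ∀ α ∈ A, ∑ i, α i = e) : {β | IsMinGen (Ideal.span (mono K '' A)) β} = A := by
  ext β
  change IsMinGen _ β ↔ β ∈ A
  rw [isMinGen_span_iff]
  constructor
  · rintro ⟨hβ, hmin⟩
    obtain ⟨α, hα, hαβ⟩ := mem_upperClosure.1 hβ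
    rwa [le_antisymm hαβ (hmin (subset_upperClosure hα) hαβ)] at hα
  · intro hβ
    refine ⟨subset_upperClosure hβ, fun γ hγ hγβ => ?_⟩
    obtain ⟨α, hα, hαγ⟩ := mem_upperClosure.1 hγ
    rw [eq_of_le_of_sum_le (hαγ.trans hγβ) (by rw [hA α hα, hA β hβ])] at hαγ
    exact hαγ

theorem span_mono_add (A B : Set (Fin n → ℕ)) :
    Ideal.span (mono K '' (A + B)) = Ideal.span (mono K '' A) * Ideal.span (mono K '' B) := by
  rw [Ideal.span_mul_span', ← Set.image2_add, Set.image_image2, ← Set.image2_mul,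
    Set.image2_image_left, Set.image2_image_right]
  simp_rw [mono_add]

theorem span_mono_nsmul (A : Set (Fin n → ℕ)) (l : ℕ) :
    Ideal.span (mono K '' (l • A)) = Ideal.span (mono K '' A) ^ l := by
  induction l with
  | zero => simp [Set.image_zero, mono_zero]
  | succ l ih => rw [succ_nsmul, span_mono_add, ih, pow_succ]

end MonomialIdeal

section Boxes

variable {n d : ℕ} {A : Set (Fin n → ℕ)}

theorem sum_eq_of_mem_nsmul (hA : ∀ α ∈ A, ∑ i, α i = d) (l : ℕ) :
    ∀ α ∈ l • A, ∑ i, α i = l * d := by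
  induction l with
  | zero => simp
  | succ l ih =>
    rw [succ_nsmul]
    rintro _ ⟨β, hβ, γ, hγ, rfl⟩
    simp [Finset.sum_add_distrib, ih β hβ, hA γ hγ, add_mul]

theorem inBox_add_mul {β : Fin n → ℕ} (hβ : ∀ i, β i ≤ d) (b : Fin n → ℕ) :
    InBox (fun _ => d) b (β + fun i => b i * d) := fun i => by
  simp only [Pi.add_apply, add_mul, one_mul]
  constructor <;> linarith [hβ i]

theorem exists_inBox_of_mem_add_nsmul_corners (hA : ∀ α ∈ A, ∑ i, α i = d) {l : ℕ}
    {α : Fin n → ℕ} (hα : α ∈ A + l • corners n d) :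
    ∃ b, InBox (fun _ => d) b α ∧ ∑ i, b i = l := by
  obtain ⟨β, hβ, _, hγ, rfl⟩ := hα
  obtain ⟨b, hb, rfl⟩ := mem_nsmul_corners.1 hγ
  exact ⟨b, inBox_add_mul (apply_le_of_sum_eq (hA β hβ)) b, hb⟩

theorem sub_mem_of_inBox (hd : 0 < d) (hA : ∀ α ∈ A, ∑ i, α i = d) (hcor : corners n d ⊆ A)
    {a α : Fin n → ℕ} (hα : α ∈ A + (∑ i, a i) • corners n d) (hbox : InBox (fun _ => d) a α) :
    α - (fun i => a i * d) ∈ A := by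
  obtain ⟨β, hβ, _, hγ, rfl⟩ := hα
  obtain ⟨b, hb, rfl⟩ := mem_nsmul_corners.1 hγ
  -- Either `β` is a corner and every coordinate of `α` is divisible by `d`,
  -- or all `β i < d` and the box forces `b = a`.
  by_cases hcorner : ∃ i, d ≤ β i
  · obtain ⟨i, hi⟩ := hcorner
    rw [eq_single_of_le_apply (hA β hβ) hi] at hbox ⊢
    have hle : ∀ j, a j * d ≤ (Pi.single i d : Fin n → ℕ) j + b j * d := fun j => (hbox j).1
    have hdvd : ∀ j, d ∣ (Pi.single i d : Fin n → ℕ) j + b j * d - a j * d := fun j => by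
      refine Nat.dvd_sub (dvd_add ?_ (dvd_mul_left _ _)) (dvd_mul_left _ _)
      rw [Pi.single_apply]
      split_ifs <;> simp
    have hsum : ∑ j, ((Pi.single i d : Fin n → ℕ) j + b j * d - a j * d) = d := by
      rw [Finset.sum_tsub_distrib _ fun j _ => hle j]
      simp [Finset.sum_add_distrib, ← Finset.sum_mul, hb]
    obtain ⟨k, hk⟩ := exists_eq_single_of_dvd hd hdvd hsum
    exact (congrArg (· ∈ A) hk).mpr (hcor ⟨k, rfl⟩)
  · simp only [not_exists, not_le] at hcorner
    have hab : a = b := eq_of_le_of_sum_le (fun i => ?_) hb.le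
    · subst hab
      simpa using hβ
    have hi : a i * d ≤ β i + b i * d := (hbox i).1
    have hlt : a i * d < (b i + 1) * d := by linarith [hcorner i]
    exact Nat.lt_succ_iff.1 (Nat.lt_of_mul_lt_mul_right hlt)

theorem image_sub_inBox_eq (hd : 0 < d) (hA : ∀ α ∈ A, ∑ i, α i = d) (hcor : corners n d ⊆ A)
    (a : Fin n → ℕ) :
    (fun α => α - fun i => a i * d) ''
      {α | InBox (fun _ => d) a α ∧ α ∈ A + (∑ i, a i) • corners n d} = A := by
  refine subset_antisymm ?_ fun β hβ => ⟨β + fun i => a i * d, ⟨?_, ?_⟩, add_tsub_cancel_right _ _⟩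
  · rintro _ ⟨α, ⟨hbox, hα⟩, rfl⟩
    exact sub_mem_of_inBox hd hA hcor hα hbox
  · exact inBox_add_mul (apply_le_of_sum_eq (hA β hβ)) a
  · exact Set.add_mem_add hβ (mem_nsmul_corners.2 ⟨a, rfl, rfl⟩)

theorem mem_add_corners_of_sub_mem_upperClosure (hA : ∀ α ∈ A, ∑ i, α i = d)
    {α : Fin n → ℕ} (hα : ∑ i, α i = 2 * d) {i : Fin n} (hi : d ≤ α i)
    (hsub : α - Pi.single i d ∈ upperClosure A) : α ∈ A + corners n d := by
  obtain ⟨γ, hγ, hle⟩ := mem_upperClosure.1 hsub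
  have hsingle : Pi.single i d ≤ α := single_le_iff.2 hi
  have hγα : γ = α - Pi.single i d := eq_of_le_of_sum_le hle <| by
    rw [Pi.sub_def, Finset.sum_tsub_distrib _ fun j _ => hsingle j, hA γ hγ, hα,
      Finset.sum_pi_single', if_pos (Finset.mem_univ i)]
    omega
  exact ⟨γ, hγ, _, ⟨i, rfl⟩, hγα ▸ tsub_add_cancel_of_le hsingle⟩

end Boxes

section Freiman

variable {K : Type*} [Field K] {n d : ℕ} {A : Set (Fin n → ℕ)}

theorem span_mono_inj_of_sum_eq {B C : Set (Fin n → ℕ)} {e : ℕ} (hB : ∀ β ∈ B, ∑ i, β i = e)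
    (hC : ∀ γ ∈ C, ∑ i, γ i = e) :
    Ideal.span (mono K '' B) = Ideal.span (mono K '' C) ↔ B = C :=
  ⟨fun h => by rw [← setOf_isMinGen_span_of_sum_eq (K := K) hB, h,
    setOf_isMinGen_span_of_sum_eq hC], fun h => h ▸ rfl⟩

theorem setOf_isMinGen_span_pow (hA : ∀ α ∈ A, ∑ i, α i = d) (l : ℕ) :
    {α | IsMinGen (Ideal.span (mono K '' A) ^ l) α} = l • A := by
  rw [← span_mono_nsmul]
  exact setOf_isMinGen_span_of_sum_eq (sum_eq_of_mem_nsmul hA l)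

theorem span_sq_eq_mul_iff (hA : ∀ α ∈ A, ∑ i, α i = d) (hcor : corners n d ⊆ A) :
    Ideal.span (mono K '' A) ^ 2 = Ideal.span (mono K '' A) * Ideal.span (mono K '' corners n d) ↔
      A + A = A + corners n d := by
  have hAA : ∀ α ∈ A + A, ∑ i, α i = 2 * d := by rw [← two_nsmul]; exact sum_eq_of_mem_nsmul hA 2
  rw [← span_mono_nsmul, ← span_mono_add, two_nsmul]
  exact span_mono_inj_of_sum_eq hAA fun α hα => hAA α (Set.add_subset_add_left hcor hα)

theorem ncard_add_self_eq_iff (hd : 0 < d) (hfin : A.Finite) (hA : ∀ α ∈ A, ∑ i, α i = d)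
    (hcor : corners n d ⊆ A) :
    (A + A).ncard = n * A.ncard - n.choose 2 ↔ A + A = A + corners n d := by
  have hcount := ncard_add_corners hd hfin hA hcor
  refine ⟨fun h => ?_, fun h => by rw [h]; omega⟩
  exact (Set.eq_of_subset_of_ncard_le (Set.add_subset_add_left hcor) (by omega)
    (hfin.add hfin)).symm

theorem isVeryGood_span_of_add_self_eq (hd : 0 < d) (hA : ∀ α ∈ A, ∑ i, α i = d)
    (hcor : corners n d ⊆ A) (h : A + A = A + corners n d) :
    IsVeryGood (Ideal.span (mono K '' A)) (fun _ => d) := by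
  have hpow (l : ℕ) :
      {α | IsMinGen (Ideal.span (mono K '' A) ^ (l + 1)) α} = A + l • corners n d := by
    rw [setOf_isMinGen_span_pow hA, nsmul_succ_eq_add_nsmul_of_add_self h]
  refine ⟨fun l hl α hα => ?_, fun a => ?_⟩
  · obtain ⟨l, rfl⟩ := Nat.exists_eq_add_of_le' hl
    exact exists_inBox_of_mem_add_nsmul_corners hA (hpow l ▸ hα)
  · have hbox :
        {α | InBox (fun _ => d) a α ∧ IsMinGen (Ideal.span (mono K '' A) ^ (∑ i, a i + 1)) α} =
          {α | InBox (fun _ => d) a α ∧ α ∈ A + (∑ i, a i) • corners n d} :=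
      Set.ext fun α => and_congr_right fun _ => Set.ext_iff.1 (hpow _) α
    rw [boxIdeal, ← Set.image_image (mono K), hbox, image_sub_inBox_eq hd hA hcor a]

theorem add_self_subset_of_isVeryGood (hA : ∀ α ∈ A, ∑ i, α i = d)
    (h : IsVeryGood (Ideal.span (mono K '' A)) (fun _ => d)) : A + A ⊆ A + corners n d := by
  intro α hα
  have hmin : IsMinGen (Ideal.span (mono K '' A) ^ 2) α := by
    change α ∈ {α | IsMinGen (Ideal.span (mono K '' A) ^ 2) α}
    rwa [setOf_isMinGen_span_pow hA, two_nsmul]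
  obtain ⟨a, hbox, ha⟩ := h.1 2 one_le_two α hmin
  obtain ⟨i, rfl⟩ := exists_eq_single_of_dvd one_pos (fun _ => one_dvd _) ha
  have hsingle : (fun j => (Pi.single i 1 : Fin n → ℕ) j * d) = Pi.single i d := by
    ext j
    rw [Pi.single_apply, Pi.single_apply]
    split_ifs <;> simp
  have hsub : mono K (α - Pi.single i d) ∈ Ideal.span (mono K '' A) := by
    rw [← h.2 (Pi.single i 1), boxIdeal, ← hsingle]
    exact Ideal.subset_span ⟨α, ⟨hbox, by simpa using hmin⟩, rfl⟩
  have hi : d ≤ α i := by simpa using (hbox i).1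
  have hα2 : ∑ j, α j = 2 * d := sum_eq_of_mem_nsmul hA 2 α (by rwa [two_nsmul])
  exact mem_add_corners_of_sub_mem_upperClosure hA hα2 hi (mono_mem_span_iff.1 hsub)

end Freiman

/-- Theorem 11.2: for an `𝔪`-primary monomial ideal `I` equigenerated in degree
`d` (so `μ_i = x_i^d`), with `J = ⟨x_1^d,…,x_n^d⟩`, the following are equivalent:
(1) `I` is Freiman, i.e. `|G(I²)| = n·|G(I)| − C(n,2)`;
(2) `I` is very good;
(3) `I² = I·J`. -/
theorem freiman_tfae {K : Type*} [Field K] {n : ℕ}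
    (I : Ideal (MvPolynomial (Fin n) K)) (d : ℕ) (hd : 0 < d)
    (hI : MPrimaryWithCorners I (fun _ => d))
    (hequi : ∀ α : Fin n → ℕ, IsMinGen I α → ∑ i, α i = d) :
    List.TFAE
      [{α : Fin n → ℕ | IsMinGen (I ^ 2) α}.ncard =
         n * {α : Fin n → ℕ | IsMinGen I α}.ncard - n.choose 2,
       IsVeryGood I (fun _ => d),
       I ^ 2 = I * Ideal.span (Set.range fun i : Fin n =>
         mono K (Pi.single i d))] := by
  obtain ⟨hmon, -, -, hcorners⟩ := hI
  set A := {α : Fin n → ℕ | IsMinGen I α}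
  have hA : ∀ α ∈ A, ∑ i, α i = d := hequi
  have hIA : I = Ideal.span (mono K '' A) := hmon.eq_span_setOf_isMinGen
  have hcor : corners n d ⊆ A := Set.range_subset_iff.2 hcorners
  have hfin : A.Finite := (Finset.Nat.antidiagonalTuple n d).finite_toSet.subset
    fun α hα => Finset.Nat.mem_antidiagonalTuple.2 (hA α hα)
  have hJ : Set.range (fun i => mono K (Pi.single i d)) = mono K '' corners n d :=
    Set.range_comp' (mono K) _
  rw [hJ, hIA, setOf_isMinGen_span_pow hA, two_nsmul, span_sq_eq_mul_iff hA hcor,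
    ncard_add_self_eq_iff hd hfin hA hcor]
  tfae_have 1 → 2 := isVeryGood_span_of_add_self_eq hd hA hcor
  tfae_have 2 → 3 := fun h =>
    (add_self_subset_of_isVeryGood hA h).antisymm (Set.add_subset_add_left hcor)
  tfae_have 3 → 1 := id
  tfae_finish

end GasanovaRR
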